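/- An even nonnegative integer n satisfies v(n) = 0 if and only if n = 0 or n is of the form 2^t − 2 or 2^t for some positive integer t. -/

import Mathlib

/-- The value of a word over the digits `{0,1,2}`, read as a (hyper)binary expansion:
`wordVal (x₀ … x_k) = Σ x_i · 2^(k-i)`. -/
def wordVal : List ℕ → ℕ
  | [] => 0
  | d :: w => d * 2 ^ w.length + wordVal w

/-- `Hyp n` is the set of hyperbinary expansions of `n`: words over `{0,1,2}` with
nonzero leading digit whose value is `n` (the empty word is the unique expansion of `0`). -/
def Hyp (n : ℕ) : Set (List ℕ) :=
  {w | (∀ d ∈ w, d ≤ 2) ∧ w.head? ≠ some 0 ∧ wordVal w = n}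

/-- Single-step reduction of type `→` : `(x02y, x10y)` or `(2y, 10y)`. -/
def StepArrow (a b : List ℕ) : Prop :=
  (∃ x y : List ℕ, a = x ++ 0 :: 2 :: y ∧ b = x ++ 1 :: 0 :: y) ∨
    (∃ y : List ℕ, a = 2 :: y ∧ b = 1 :: 0 :: y)

/-- Single-step reduction of type `↠` : `(x12y, x20y)`. -/
def StepDouble (a b : List ℕ) : Prop :=
  ∃ x y : List ℕ, a = x ++ 1 :: 2 :: y ∧ b = x ++ 2 :: 0 :: y

/-- A single-step reduction (of either type). -/
def Step (a b : List ℕ) : Prop := StepArrow a b ∨ StepDouble a b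

/-- `bFun n` is the number of hyperbinary expansions of `n`. -/
noncomputable def bFun (n : ℕ) : ℕ := (Hyp n).ncard

/-- The set of arcs of the graph `A(n)`: labeled single-step reductions between
hyperbinary expansions of `n`. -/
def arcs (n : ℕ) : Set (List ℕ × List ℕ) :=
  {p | p.1 ∈ Hyp n ∧ p.2 ∈ Hyp n ∧ Step p.1 p.2}

/-- `aFun n` is the number of arcs of `A(n)`. -/
noncomputable def aFun (n : ℕ) : ℕ := (arcs n).ncard

/-- The cyclomatic number `v(n) = a(n) - b(n) + 1` of the connected graph `A(n)`. -/
noncomputable def vFun (n : ℕ) : ℕ := aFun n + 1 - bFun n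
lemma wordVal_append (x y : List ℕ) :
    wordVal (x ++ y) = wordVal x * 2 ^ y.length + wordVal y := by
  induction x with
  | nil => simp [wordVal]
  | cons a x ih =>
    show wordVal (a :: (x ++ y)) = _
    simp only [wordVal, ih, List.length_append]
    rw [pow_add]; ring

lemma wordVal_concat (u : List ℕ) (d : ℕ) : wordVal (u ++ [d]) = 2 * wordVal u + d := by
  simp [wordVal_append, wordVal]; ring

lemma concat_inj {a b : List ℕ} {d e : ℕ} (h : a ++ [d] = b ++ [e]) : a = b ∧ d = e := by
  have h2 : d :: a.reverse = e :: b.reverse := by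
    simpa using congrArg List.reverse h
  have h3 : d = e := by injection h2
  have h4 : a.reverse = b.reverse := by injection h2
  exact ⟨List.reverse_injective h4, h3⟩

lemma hyp_nil : ([] : List ℕ) ∈ Hyp 0 := by
  refine ⟨by intro d hd; simp at hd, by simp, rfl⟩

lemma hyp_zero {u : List ℕ} (h : u ∈ Hyp 0) : u = [] := by
  obtain ⟨hd, hh, hv⟩ := h
  cases u with
  | nil => rfl
  | cons a w =>
    exfalso
    simp only [wordVal] at hv
    have ha : a ≠ 0 := by simpa using hh
    have : 1 ≤ a * 2 ^ w.length :=
      Nat.one_le_iff_ne_zero.2 (by positivity)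
    omega
lemma hyp_ne_nil {u : List ℕ} {n : ℕ} (h : u ∈ Hyp n) (hn : n ≠ 0) : u ≠ [] := by
  rintro rfl
  exact hn (h.2.2.symm ▸ rfl)

lemma head?_concat {u : List ℕ} (hu : u ≠ []) (d : ℕ) : (u ++ [d]).head? = u.head? := by
  cases u with
  | nil => exact absurd rfl hu
  | cons a w => simp

lemma mem_hyp_concat {u : List ℕ} {m d : ℕ} (h : u ∈ Hyp m) (hd : d ≤ 2)
    (h0 : u = [] → d ≠ 0) : u ++ [d] ∈ Hyp (2 * m + d) := by
  obtain ⟨hdig, hh, hv⟩ := h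
  refine ⟨?_, ?_, ?_⟩
  · intro e he
    rcases List.mem_append.1 he with h1 | h1
    · exact hdig e h1
    · simp at h1; omega
  · cases u with
    | nil => simpa using fun h => h0 rfl h
    | cons a w => simpa using (by simpa using hh)
  · rw [wordVal_concat, hv]

lemma hyp_strip {u : List ℕ} {d n : ℕ} (h : u ++ [d] ∈ Hyp n) :
    d ≤ 2 ∧ n = 2 * wordVal u + d ∧ (u ≠ [] → u ∈ Hyp (wordVal u)) := by
  obtain ⟨hdig, hh, hv⟩ := h
  refine ⟨hdig d (by simp), by rw [← hv, wordVal_concat], fun hu => ⟨?_, ?_, rfl⟩⟩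
  · intro e he; exact hdig e (List.mem_append.2 (Or.inl he))
  · rwa [head?_concat hu] at hh

lemma exists_bin (n : ℕ) : ∃ u, u ∈ Hyp n ∧ ∀ d ∈ u, d ≤ 1 := by
  induction n using Nat.strong_induction_on with
  | _ n ih =>
    rcases Nat.eq_zero_or_pos n with rfl | hn
    · exact ⟨[], hyp_nil, by simp⟩
    · obtain ⟨u, hu, hu1⟩ := ih (n / 2) (by omega)
      have hd2 : n % 2 ≤ 2 := by omega
      rcases eq_or_ne u [] with rfl | hne
      · have h0 : wordVal ([] : List ℕ) = n / 2 := hu.2.2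
        have : n / 2 = 0 := by simpa [wordVal] using h0.symm
        have hn1 : n = 1 := by omega
        subst hn1
        refine ⟨[1], ⟨by simp, by simp, by simp [wordVal]⟩, by simp⟩
      · refine ⟨u ++ [n % 2], ?_, ?_⟩
        · have := mem_hyp_concat hu hd2 (fun h => absurd h hne)
          have he : 2 * (n / 2) + n % 2 = n := by omega
          rwa [he] at this
        · intro d hd
          rcases List.mem_append.1 hd with h1 | h1
          · exact hu1 d h1
          · simp at h1; omega
lemma eq_concat_of_ne_nil {u : List ℕ} (h : u ≠ []) : ∃ q d, u = q ++ [d] := by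
  rcases List.eq_nil_or_concat u with h1 | ⟨L, b, h1⟩
  · exact absurd h1 h
  · exact ⟨L, b, by simpa [List.concat_eq_append] using h1⟩

lemma hyp_pow_sub_one {s : ℕ} {u : List ℕ} (h : u ∈ Hyp (2 ^ s - 1)) :
    u = List.replicate s 1 := by
  induction s generalizing u with
  | zero => simpa using hyp_zero (by simpa using h)
  | succ s ih =>
    have h2 : (2:ℕ) ^ (s+1) - 1 ≠ 0 := by
      have : (2:ℕ) ^ s ≥ 1 := Nat.one_le_two_pow
      have : (2:ℕ) ^ (s+1) = 2 * 2 ^ s := by ring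
      omega
    obtain ⟨q, d, rfl⟩ := eq_concat_of_ne_nil (hyp_ne_nil h h2)
    obtain ⟨hd, hv, hq⟩ := hyp_strip h
    have hpow : (2:ℕ) ^ (s+1) = 2 * 2 ^ s := by ring
    have hs1 : (1:ℕ) ≤ 2 ^ s := Nat.one_le_two_pow
    have hd1 : d = 1 := by omega
    have hqv : wordVal q = 2 ^ s - 1 := by omega
    subst hd1
    rcases eq_or_ne q [] with rfl | hne
    · have : wordVal ([] : List ℕ) = 0 := rfl
      have hs0 : s = 0 := by
        by_contra hs
        have : (2:ℕ) ^ s ≥ 2 := by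
          calc (2:ℕ) ^ s ≥ 2 ^ 1 := Nat.pow_le_pow_right (by norm_num) (by omega)
          _ = 2 := by norm_num
        omega
      subst hs0; rfl
    · have := ih (hqv ▸ hq hne)
      rw [this, List.replicate_succ' ]

lemma bin_unique {n : ℕ} {u v : List ℕ} (hu : u ∈ Hyp n) (hv : v ∈ Hyp n)
    (h2u : (2:ℕ) ∉ u) (h2v : (2:ℕ) ∉ v) : u = v := by
  induction n using Nat.strong_induction_on generalizing u v with
  | _ n ih =>
    rcases Nat.eq_zero_or_pos n with rfl | hn
    · rw [hyp_zero hu, hyp_zero hv]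
    · obtain ⟨p, d, rfl⟩ := eq_concat_of_ne_nil (hyp_ne_nil hu (by omega))
      obtain ⟨q, e, rfl⟩ := eq_concat_of_ne_nil (hyp_ne_nil hv (by omega))
      obtain ⟨hd2, hnv, hp⟩ := hyp_strip hu
      obtain ⟨he2, hnv', hq⟩ := hyp_strip hv
      have hd1 : d ≤ 1 := by
        rcases Nat.lt_or_ge d 2 with h | h; · omega
        · exact absurd (List.mem_append.2 (Or.inr (by simp; omega))) h2u
      have he1 : e ≤ 1 := by
        rcases Nat.lt_or_ge e 2 with h | h; · omega
        · exact absurd (List.mem_append.2 (Or.inr (by simp; omega))) h2v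
      have hde : d = e := by omega
      subst hde
      have hval : wordVal p = wordVal q := by omega
      rcases eq_or_ne p [] with rfl | hpne
      · have h0 : wordVal ([] : List ℕ) = 0 := rfl
        rcases eq_or_ne q [] with rfl | hqne
        · rfl
        · exfalso
          have hq' := hq hqne
          have : q = [] := hyp_zero (by rwa [← hval, h0] at hq')
          exact hqne this
      · rcases eq_or_ne q [] with rfl | hqne
        · exfalso
          have hp' := hp hpne
          have h0 : wordVal ([] : List ℕ) = 0 := rfl
          have : p = [] := hyp_zero (by rwa [hval, h0] at hp')
          exact hpne this
        · have h2p : (2:ℕ) ∉ p := fun h => h2u (List.mem_append.2 (Or.inl h))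
          have h2q : (2:ℕ) ∉ q := fun h => h2v (List.mem_append.2 (Or.inl h))
          have hlt : wordVal p < n := by omega
          have := ih (wordVal p) hlt (hp hpne) (hval ▸ hq hqne) h2p h2q
          rw [this]
lemma finite_bounded_lists (k : ℕ) :
    {w : List ℕ | w.length ≤ k ∧ ∀ d ∈ w, d ≤ 2}.Finite := by
  induction k with
  | zero =>
    apply Set.Finite.subset (Set.finite_singleton ([] : List ℕ))
    rintro w ⟨hl, -⟩
    have : w = [] := List.length_eq_zero_iff.1 (by omega)
    simp [this]
  | succ k ih =>
    apply Set.Finite.subset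
      (Set.Finite.insert ([] : List ℕ)
        (Set.Finite.image2 (· :: ·) (Set.finite_Iic (2:ℕ)) ih))
    rintro w ⟨hl, hd⟩
    cases w with
    | nil => exact Set.mem_insert _ _
    | cons a w =>
      refine Set.mem_insert_of_mem _ (Set.mem_image2_of_mem ?_ ?_)
      · exact hd a (by simp)
      · refine ⟨by simp only [List.length_cons] at hl; omega, ?_⟩
        intro d hdw; exact hd d (by simp [hdw])

lemma hyp_length_le {n : ℕ} {u : List ℕ} (h : u ∈ Hyp n) : u.length ≤ n := by
  cases u with
  | nil => simp
  | cons a w =>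
    obtain ⟨hd, hh, hv⟩ := h
    have ha : 1 ≤ a := by
      have : a ≠ 0 := by simpa using hh
      omega
    have h1 : 2 ^ w.length ≤ n := by
      calc 2 ^ w.length ≤ a * 2 ^ w.length := Nat.le_mul_of_pos_left _ (by omega)
      _ ≤ n := by simp [wordVal] at hv; omega
    have h2 : w.length + 1 ≤ 2 ^ w.length := Nat.succ_le_of_lt (Nat.lt_two_pow_self)
    simpa using le_trans h2 h1

lemma hyp_finite (n : ℕ) : (Hyp n).Finite := by
  apply Set.Finite.subset (finite_bounded_lists n)
  intro u hu
  exact ⟨hyp_length_le hu, hu.1⟩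

lemma arcs_finite (n : ℕ) : (arcs n).Finite := by
  apply Set.Finite.subset ((hyp_finite n).prod (hyp_finite n))
  rintro ⟨u, v⟩ ⟨h1, h2, -⟩
  exact ⟨h1, h2⟩
lemma step_two_mem {a b : List ℕ} (h : Step a b) : 2 ∈ a := by
  rcases h with (⟨x, y, rfl, -⟩ | ⟨y, rfl, -⟩) | ⟨x, y, rfl, -⟩ <;> simp

lemma step_concat {a b : List ℕ} (h : Step a b) (d : ℕ) : Step (a ++ [d]) (b ++ [d]) := by
  rcases h with (⟨x, y, rfl, rfl⟩ | ⟨y, rfl, rfl⟩) | ⟨x, y, rfl, rfl⟩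
  · exact Or.inl (Or.inl ⟨x, y ++ [d], by simp, by simp⟩)
  · exact Or.inl (Or.inr ⟨y ++ [d], by simp, by simp⟩)
  · exact Or.inr ⟨x, y ++ [d], by simp, by simp⟩

lemma step_hyp {n : ℕ} {u v : List ℕ} (hu : u ∈ Hyp n) (h : Step u v) : v ∈ Hyp n := by
  obtain ⟨hdig, hh, hv⟩ := hu
  rcases h with (⟨x, y, rfl, rfl⟩ | ⟨y, rfl, rfl⟩) | ⟨x, y, rfl, rfl⟩
  · refine ⟨?_, ?_, ?_⟩
    · intro e he
      rcases List.mem_append.1 he with h1 | h1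
      · exact hdig e (List.mem_append.2 (Or.inl h1))
      · simp at h1
        rcases h1 with rfl | rfl | h1
        · omega
        · omega
        · exact hdig e (by simp [h1])
    · cases x with
      | nil => simp at hh
      | cons a w => simpa using (by simpa using hh)
    · rw [← hv, wordVal_append, wordVal_append]
      simp only [wordVal, List.length_cons]
      ring
  · refine ⟨?_, ?_, ?_⟩
    · intro e he
      simp at he
      rcases he with rfl | rfl | h1
      · omega
      · omega
      · exact hdig e (by simp [h1])
    · simp
    · rw [← hv]
      simp only [wordVal, List.length_cons]
      ring
  · refine ⟨?_, ?_, ?_⟩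
    · intro e he
      rcases List.mem_append.1 he with h1 | h1
      · exact hdig e (List.mem_append.2 (Or.inl h1))
      · simp at h1
        rcases h1 with rfl | rfl | h1
        · omega
        · omega
        · exact hdig e (by simp [h1])
    · cases x with
      | nil => simp
      | cons a w => simpa using (by simpa using hh)
    · rw [← hv, wordVal_append, wordVal_append]
      simp only [wordVal, List.length_cons]
      ring

lemma redex_exists {w : List ℕ} (hdig : ∀ d ∈ w, d ≤ 2) (h2 : 2 ∈ w) :
    ∃ v, Step w v := by
  induction w with
  | nil => simp at h2
  | cons a rest ih =>
    rcases eq_or_ne a 2 with rfl | ha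
    · exact ⟨1 :: 0 :: rest, Or.inl (Or.inr ⟨rest, rfl, rfl⟩)⟩
    · match rest, h2 with
      | rest, h2 =>
        cases rest with
        | nil =>
          simp at h2
          exact absurd h2.symm ha
        | cons b q =>
          rcases eq_or_ne b 2 with rfl | hb
          · have ha2 : a ≤ 2 := hdig a (by simp)
            rcases Nat.lt_or_ge a 1 with h0 | h1
            · have : a = 0 := by omega
              subst this
              exact ⟨1 :: 0 :: q, Or.inl (Or.inl ⟨[], q, rfl, rfl⟩)⟩
            · have : a = 1 := by omega
              subst this
              exact ⟨2 :: 0 :: q, Or.inr ⟨[], q, rfl, rfl⟩⟩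
          · have h2' : 2 ∈ b :: q := by
              rcases (List.mem_cons.1 h2) with h | h
              · exact absurd h.symm ha
              · exact h
            obtain ⟨v, hv⟩ := ih (fun d hd => hdig d (by simp [List.mem_cons.1 hd])) h2'
            rcases hv with (⟨x, y, hx, hy⟩ | ⟨y, hx, hy⟩) | ⟨x, y, hx, hy⟩
            · exact ⟨a :: v, Or.inl (Or.inl ⟨a :: x, y, by simp [hx], by simp [hy]⟩)⟩
            · have hb2 : b = 2 := by injection hx
              exact absurd hb2 hb
            · exact ⟨a :: v, Or.inr ⟨a :: x, y, by simp [hx], by simp [hy]⟩⟩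
lemma step_unconcat {u v : List ℕ} {d : ℕ} (hd : d ≤ 1) (h : Step (u ++ [d]) v) :
    ∃ v', Step u v' ∧ v = v' ++ [d] := by
  rcases h with (⟨x, y, hx, hv⟩ | ⟨y, hx, hv⟩) | ⟨x, y, hx, hv⟩
  · rcases List.eq_nil_or_concat y with rfl | ⟨y', e, rfl⟩
    · have hx' : u ++ [d] = (x ++ [0]) ++ [2] := by simpa using hx
      obtain ⟨-, h2⟩ := concat_inj hx'
      omega
    · simp only [List.concat_eq_append] at hx hv
      have hx' : u ++ [d] = (x ++ 0 :: 2 :: y') ++ [e] := by simpa using hx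
      obtain ⟨rfl, rfl⟩ := concat_inj hx'
      refine ⟨x ++ 1 :: 0 :: y', Or.inl (Or.inl ⟨x, y', rfl, rfl⟩), by simpa using hv⟩
  · cases u with
    | nil =>
      simp at hx
      omega
    | cons a u' =>
      have ha : a = 2 := by injection hx
      have hy : u' ++ [d] = y := by injection hx
      subst ha
      refine ⟨1 :: 0 :: u', Or.inl (Or.inr ⟨u', rfl, rfl⟩), ?_⟩
      rw [hv, ← hy]
      simp
  · rcases List.eq_nil_or_concat y with rfl | ⟨y', e, rfl⟩
    · have hx' : u ++ [d] = (x ++ [1]) ++ [2] := by simpa using hx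
      obtain ⟨-, h2⟩ := concat_inj hx'
      omega
    · simp only [List.concat_eq_append] at hx hv
      have hx' : u ++ [d] = (x ++ 1 :: 2 :: y') ++ [e] := by simpa using hx
      obtain ⟨rfl, rfl⟩ := concat_inj hx'
      refine ⟨x ++ 2 :: 0 :: y', Or.inr ⟨x, y', rfl, rfl⟩, by simpa using hv⟩

lemma step_unconcat2 {u v : List ℕ} (h : Step (u ++ [2]) v) :
    (∃ v', Step u v' ∧ v = v' ++ [2]) ∨ (∃ p, u = p ++ [0] ∧ v = p ++ [1, 0]) ∨
    (∃ p, u = p ++ [1] ∧ v = p ++ [2, 0]) ∨ (u = [] ∧ v = [1, 0]) := by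
  rcases h with (⟨x, y, hx, hv⟩ | ⟨y, hx, hv⟩) | ⟨x, y, hx, hv⟩
  · rcases List.eq_nil_or_concat y with rfl | ⟨y', e, rfl⟩
    · have hx' : u ++ [2] = (x ++ [0]) ++ [2] := by simpa using hx
      obtain ⟨rfl, -⟩ := concat_inj hx'
      exact Or.inr (Or.inl ⟨x, rfl, by simpa using hv⟩)
    · simp only [List.concat_eq_append] at hx hv
      have hx' : u ++ [2] = (x ++ 0 :: 2 :: y') ++ [e] := by simpa using hx
      obtain ⟨rfl, he⟩ := concat_inj hx'
      subst he
      exact Or.inl ⟨x ++ 1 :: 0 :: y', Or.inl (Or.inl ⟨x, y', rfl, rfl⟩), by simpa using hv⟩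
  · cases u with
    | nil =>
      simp at hx
      exact Or.inr (Or.inr (Or.inr ⟨rfl, by rw [hv, hx]⟩))
    | cons a u' =>
      have ha : a = 2 := by injection hx
      have hy : u' ++ [2] = y := by injection hx
      subst ha
      refine Or.inl ⟨1 :: 0 :: u', Or.inl (Or.inr ⟨u', rfl, rfl⟩), ?_⟩
      rw [hv, ← hy]
      simp
  · rcases List.eq_nil_or_concat y with rfl | ⟨y', e, rfl⟩
    · have hx' : u ++ [2] = (x ++ [1]) ++ [2] := by simpa using hx
      obtain ⟨rfl, -⟩ := concat_inj hx'
      exact Or.inr (Or.inr (Or.inl ⟨x, rfl, by simpa using hv⟩))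
    · simp only [List.concat_eq_append] at hx hv
      have hx' : u ++ [2] = (x ++ 1 :: 2 :: y') ++ [e] := by simpa using hx
      obtain ⟨rfl, he⟩ := concat_inj hx'
      subst he
      exact Or.inl ⟨x ++ 2 :: 0 :: y', Or.inr ⟨x, y', rfl, rfl⟩, by simpa using hv⟩
lemma step_nil {v : List ℕ} (h : Step [] v) : False := by
  simpa using step_two_mem h

lemma step_two {v : List ℕ} (h : Step [2] v) : v = [1, 0] := by
  have h' : Step ([] ++ [2]) v := by simpa using h
  rcases step_unconcat2 h' with ⟨v', hs, -⟩ | ⟨p, hp, -⟩ | ⟨p, hp, -⟩ | ⟨-, rfl⟩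
  · exact absurd hs step_nil
  · simp at hp
  · simp at hp
  · rfl

def NoBranch (n : ℕ) : Prop := ∀ u ∈ Hyp n, ∀ v w, Step u v → Step u w → v = w

lemma noBranch_zero : NoBranch 0 := by
  intro u hu v w hv _
  rw [hyp_zero hu] at hv
  exact absurd hv step_nil

lemma noBranch_pow (t : ℕ) : NoBranch (2 ^ t) := by
  induction t with
  | zero =>
    intro u hu v w hv _
    have h1 : u ∈ Hyp (2 ^ 1 - 1) := by norm_num; exact hu
    have := hyp_pow_sub_one h1
    rw [this] at hv
    have := step_two_mem hv
    simp [List.eq_of_mem_replicate] at this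
  | succ t ih =>
    intro u hu v w hv hw
    have hpow : (2:ℕ) ^ (t+1) = 2 * 2 ^ t := by ring
    have hp1 : (1:ℕ) ≤ 2 ^ t := Nat.one_le_two_pow
    obtain ⟨q, d, rfl⟩ := eq_concat_of_ne_nil (hyp_ne_nil hu (by omega))
    obtain ⟨hd, heq, hq⟩ := hyp_strip hu
    have hd02 : d = 0 ∨ d = 2 := by omega
    rcases hd02 with rfl | rfl
    · have hqne : q ≠ [] := by
        rintro rfl
        simp only [wordVal] at heq
        omega
      have hqv : wordVal q = 2 ^ t := by omega
      have hq' : q ∈ Hyp (2 ^ t) := hqv ▸ hq hqne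
      obtain ⟨v', hsv, rfl⟩ := step_unconcat (by norm_num) hv
      obtain ⟨w', hsw, rfl⟩ := step_unconcat (by norm_num) hw
      rw [ih q hq' v' w' hsv hsw]
    · rcases eq_or_ne q [] with rfl | hqne
      · simp only [List.nil_append] at hv hw
        rw [step_two hv, step_two hw]
      · have hqv : wordVal q = 2 ^ t - 1 := by omega
        have hq' : q ∈ Hyp (2 ^ t - 1) := hqv ▸ hq hqne
        have hrep : q = List.replicate t 1 := hyp_pow_sub_one hq'
        have ht1 : 1 ≤ t := by
          rcases Nat.eq_zero_or_pos t with rfl | h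
          · rw [hrep] at hqne; simp at hqne
          · omega
        have hrep' : q = List.replicate (t-1) 1 ++ [1] := by
          rw [hrep]
          rw [← List.replicate_succ' ]
          congr 1
          omega
        have key : ∀ z, Step (q ++ [2]) z → z = List.replicate (t-1) 1 ++ [2, 0] := by
          intro z hz
          rcases step_unconcat2 hz with ⟨v', hs, -⟩ | ⟨p, hp, -⟩ | ⟨p, hp, rfl⟩ | ⟨hq0, -⟩
          · have := step_two_mem hs
            rw [hrep] at this
            have := List.eq_of_mem_replicate this
            omega
          · have : (0:ℕ) ∈ q := by rw [hp]; simp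
            rw [hrep] at this
            have := List.eq_of_mem_replicate this
            omega
          · have := concat_inj (hp.symm.trans hrep')
            rw [this.1]
          · exact absurd hq0 hqne
        rw [key v hv, key w hw]

lemma noBranch_pow_sub_two (t : ℕ) : NoBranch (2 ^ t - 2) := by
  induction t using Nat.strong_induction_on with
  | _ t ih =>
    rcases Nat.lt_or_ge t 2 with ht | ht
    · have h0 : (2:ℕ) ^ t - 2 = 0 := by
        interval_cases t <;> norm_num
      rw [h0]
      exact noBranch_zero
    · intro u hu v w hv hw
      have e1 : (2:ℕ) ^ t = 2 * 2 ^ (t-1) := by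
        rw [← pow_succ']
        congr 1
        omega
      have e2 : (2:ℕ) ^ (t-1) = 2 * 2 ^ (t-2) := by
        rw [← pow_succ']
        congr 1
        omega
      have e3 : (1:ℕ) ≤ 2 ^ (t-2) := Nat.one_le_two_pow
      obtain ⟨q, d, rfl⟩ := eq_concat_of_ne_nil (hyp_ne_nil hu (by omega))
      obtain ⟨hd, heq, hq⟩ := hyp_strip hu
      have hd02 : d = 0 ∨ d = 2 := by omega
      rcases hd02 with rfl | rfl
      · exfalso
        have hqne : q ≠ [] := by
          rintro rfl
          simp only [wordVal] at heq
          omega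
        have hqv : wordVal q = 2 ^ (t-1) - 1 := by omega
        have hq' : q ∈ Hyp (2 ^ (t-1) - 1) := hqv ▸ hq hqne
        have hrep : q = List.replicate (t-1) 1 := hyp_pow_sub_one hq'
        obtain ⟨v', hsv, -⟩ := step_unconcat (by norm_num) hv
        have := step_two_mem hsv
        rw [hrep] at this
        have := List.eq_of_mem_replicate this
        omega
      · rcases eq_or_ne q [] with rfl | hqne
        · simp only [List.nil_append] at hv hw
          rw [step_two hv, step_two hw]
        · have hqv : wordVal q = 2 ^ (t-1) - 2 := by omega
          have hq' : q ∈ Hyp (2 ^ (t-1) - 2) := hqv ▸ hq hqne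
          have hno1 : ∀ p, q ≠ p ++ [1] := by
            intro p hp
            rw [hp] at hq'
            obtain ⟨-, heq', -⟩ := hyp_strip hq'
            omega
          have hnostep : (∃ p, q = p ++ [0]) → ∀ z, ¬ Step q z := by
            rintro ⟨p, rfl⟩ z hz
            obtain ⟨-, heq', hp⟩ := hyp_strip hq'
            have hpne : p ≠ [] := by
              rintro rfl
              have := hq'.2.1
              simp at this
            have hpv : wordVal p = 2 ^ (t-2) - 1 := by omega
            have hprep : p = List.replicate (t-2) 1 := hyp_pow_sub_one (hpv ▸ hp hpne)
            obtain ⟨z', hsz, -⟩ := step_unconcat (by norm_num) hz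
            have := step_two_mem hsz
            rw [hprep] at this
            have := List.eq_of_mem_replicate this
            omega
          rcases step_unconcat2 hv with ⟨v', hsv, rfl⟩ | ⟨p, hp, rfl⟩ | ⟨p, hp, -⟩ | ⟨hq0, -⟩
          · rcases step_unconcat2 hw with ⟨w', hsw, rfl⟩ | ⟨p, hp, rfl⟩ | ⟨p, hp, -⟩ | ⟨hq0, -⟩
            · rw [ih (t-1) (by omega) q hq' v' w' hsv hsw]
            · exact absurd hsv (hnostep ⟨p, hp⟩ v')
            · exact absurd hp (hno1 p)
            · exact absurd hq0 hqne
          · rcases step_unconcat2 hw with ⟨w', hsw, rfl⟩ | ⟨p', hp', rfl⟩ | ⟨p', hp', -⟩ | ⟨hq0, -⟩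
            · exact absurd hsw (hnostep ⟨p, hp⟩ w')
            · have := concat_inj (hp.symm.trans hp')
              rw [this.1]
            · exact absurd hp' (hno1 p')
            · exact absurd hq0 hqne
          · exact absurd hp (hno1 p)
          · exact absurd hq0 hqne
lemma exists_two_expansion : ∀ m : ℕ, (∀ s, m + 1 ≠ 2 ^ s) → ∃ u, u ∈ Hyp m ∧ 2 ∈ u := by
  intro m
  induction m using Nat.strong_induction_on with
  | _ m ih =>
    intro hm
    rcases Nat.eq_zero_or_pos m with rfl | hpos
    · exact absurd (by norm_num : (0:ℕ) + 1 = 2 ^ 0) (hm 0)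
    · rcases Nat.even_or_odd m with he | ho
      · obtain ⟨j, hj⟩ := he
        have hj1 : 1 ≤ j := by omega
        obtain ⟨u', hu', -⟩ := exists_bin (j - 1)
        have := mem_hyp_concat (d := 2) hu' (by norm_num) (by intro _; norm_num)
        refine ⟨u' ++ [2], ?_, by simp⟩
        have he2 : 2 * (j - 1) + 2 = m := by omega
        rwa [he2] at this
      · obtain ⟨j, hj⟩ := ho
        have hj2 : ∀ s, j + 1 ≠ 2 ^ s := by
          intro s hs
          exact hm (s + 1) (by rw [pow_succ]; omega)
        obtain ⟨u', hu', h2u'⟩ := ih j (by omega) hj2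
        have := mem_hyp_concat (d := 1) hu' (by norm_num) (by intro _; norm_num)
        refine ⟨u' ++ [1], ?_, by simp [h2u']⟩
        have he2 : 2 * j + 1 = m := by omega
        rwa [he2] at this

lemma exists_tail01 (m : ℕ) (hm1 : ∀ s, m + 1 ≠ 2 ^ s) (hm2 : ∀ s, m + 2 ≠ 2 ^ s) :
    ∃ u p e, u ∈ Hyp m ∧ 2 ∈ u ∧ u = p ++ [e] ∧ e ≤ 1 := by
  rcases Nat.even_or_odd m with he | ho
  · obtain ⟨j, hj⟩ := he
    have hj1 : 1 ≤ j := by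
      rcases Nat.eq_zero_or_pos j with rfl | h
      · exact absurd (by omega : m + 2 = 2 ^ 1) (hm2 1)
      · omega
    have hj2 : ∀ s, j + 1 ≠ 2 ^ s := by
      intro s hs
      exact hm2 (s + 1) (by rw [pow_succ]; omega)
    obtain ⟨u', hu', h2u'⟩ := exists_two_expansion j hj2
    have hm : u' ++ [0] ∈ Hyp m := by
      have := mem_hyp_concat (d := 0) hu' (by norm_num)
        (fun h => absurd (h ▸ h2u') (by simp))
      have he2 : 2 * j + 0 = m := by omega
      rwa [he2] at this
    exact ⟨u' ++ [0], u', 0, hm, List.mem_append.2 (Or.inl h2u'), rfl, by norm_num⟩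
  · obtain ⟨j, hj⟩ := ho
    have hj2 : ∀ s, j + 1 ≠ 2 ^ s := by
      intro s hs
      exact hm1 (s + 1) (by rw [pow_succ]; omega)
    obtain ⟨u', hu', h2u'⟩ := exists_two_expansion j hj2
    have hm : u' ++ [1] ∈ Hyp m := by
      have := mem_hyp_concat (d := 1) hu' (by norm_num) (by intro _; norm_num)
      have he2 : 2 * j + 1 = m := by omega
      rwa [he2] at this
    exact ⟨u' ++ [1], u', 1, hm, List.mem_append.2 (Or.inl h2u'), rfl, by norm_num⟩

lemma rich_count (n : ℕ) (hn : Even n) (h0 : n ≠ 0)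
    (hns : ∀ t, 0 < t → n ≠ 2 ^ t - 2 ∧ n ≠ 2 ^ t) : bFun n ≤ aFun n := by
  classical
  obtain ⟨k, hk⟩ := hn
  have hk1 : 1 ≤ k := by omega
  set m := k - 1 with hmdef
  have hnm : n = 2 * m + 2 := by omega
  have hm1 : ∀ s, m + 1 ≠ 2 ^ s := by
    intro s hs
    exact (hns (s + 1) (by omega)).2 (by rw [pow_succ]; omega)
  have hm2 : ∀ s, m + 2 ≠ 2 ^ s := by
    intro s hs
    rcases Nat.eq_zero_or_pos s with rfl | hspos
    · rw [pow_zero] at hs; omega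
    · exact (hns (s + 1) (by omega)).1 (by rw [pow_succ]; omega)
  obtain ⟨u, p, e, hu, h2u, hupe, he1⟩ := exists_tail01 m hm1 hm2
  have hwstar : u ++ [2] ∈ Hyp n := by
    have := mem_hyp_concat (d := 2) hu (by norm_num) (fun h => absurd (h ▸ h2u) (by simp))
    rwa [← hnm] at this
  obtain ⟨v', hv'⟩ := redex_exists hu.1 h2u
  set wstar := u ++ [2] with hws
  set v1 := v' ++ [2] with hv1def
  have hv1 : Step wstar v1 := step_concat hv' 2
  set v2 := p ++ [e + 1, 0] with hv2def
  have hv2 : Step wstar v2 := by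
    have hd : e = 0 ∨ e = 1 := by omega
    rcases hd with rfl | rfl
    · exact Or.inl (Or.inl ⟨p, [], by rw [hws, hupe]; simp, by simp [hv2def]⟩)
    · exact Or.inr ⟨p, [], by rw [hws, hupe]; simp, by simp [hv2def]⟩
  have hne12 : v1 ≠ v2 := by
    intro h
    have h' : v' ++ [2] = (p ++ [e + 1]) ++ [0] := by
      rw [← hv1def, h, hv2def]; simp
    have := (concat_inj h').2
    omega
  have hv1m : v1 ∈ Hyp n := step_hyp hwstar hv1
  have hv2m : v2 ∈ Hyp n := step_hyp hwstar hv2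
  have hwsm : wstar ∈ Hyp n := hwstar
  -- the injection
  refine Set.ncard_le_ncard_of_injOn
    (fun w => if w = wstar then (wstar, v2)
      else if h2 : ∃ z, Step w z then (w, h2.choose) else (wstar, v1))
    ?_ ?_ (arcs_finite n)
  · intro w hw
    by_cases hc : w = wstar
    · simp only [hc, if_pos rfl]
      exact ⟨hwsm, hv2m, hv2⟩
    · simp only [if_neg hc]
      by_cases h2 : ∃ z, Step w z
      · simp only [dif_pos h2]
        exact ⟨hw, step_hyp hw h2.choose_spec, h2.choose_spec⟩
      · simp only [dif_neg h2]
        exact ⟨hwsm, hv1m, hv1⟩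
  · intro w1 hw1 w2 hw2 hf
    by_cases c1 : w1 = wstar <;> by_cases c2 : w2 = wstar
    · rw [c1, c2]
    · simp only [c1, if_pos rfl, if_neg c2] at hf
      by_cases h2 : ∃ z, Step w2 z
      · simp only [dif_pos h2] at hf
        exact absurd (congrArg Prod.fst hf).symm c2
      · simp only [dif_neg h2] at hf
        exact absurd (congrArg Prod.snd hf) (fun h => hne12 h.symm)
    · simp only [c2, if_neg c1, if_pos rfl] at hf
      by_cases h1 : ∃ z, Step w1 z
      · simp only [dif_pos h1] at hf
        exact absurd (congrArg Prod.fst hf) c1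
      · simp only [dif_neg h1] at hf
        exact absurd (congrArg Prod.snd hf) hne12
    · simp only [if_neg c1, if_neg c2] at hf
      by_cases h1 : ∃ z, Step w1 z <;> by_cases h2 : ∃ z, Step w2 z
      · simp only [dif_pos h1, dif_pos h2] at hf
        exact congrArg Prod.fst hf
      · simp only [dif_pos h1, dif_neg h2] at hf
        exact absurd (congrArg Prod.fst hf) c1
      · simp only [dif_neg h1, dif_pos h2] at hf
        exact absurd (congrArg Prod.fst hf).symm c2
      · have h2w1 : (2:ℕ) ∉ w1 := fun h => h1 (redex_exists hw1.1 h)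
        have h2w2 : (2:ℕ) ∉ w2 := fun h => h2 (redex_exists hw2.1 h)
        exact bin_unique hw1 hw2 h2w1 h2w2

lemma noBranch_count (n : ℕ) (hnb : NoBranch n) : vFun n = 0 := by
  obtain ⟨bw, hbw, hbw1⟩ := exists_bin n
  have h2bw : (2:ℕ) ∉ bw := fun h => by have := hbw1 2 h; omega
  have hb1 : 1 ≤ bFun n := by
    have h := (Set.ncard_pos (hyp_finite n)).2 ⟨bw, hbw⟩
    unfold bFun
    omega
  have hsub : aFun n ≤ bFun n - 1 := by
    have hle : aFun n ≤ (Hyp n \ {bw}).ncard := by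
      refine Set.ncard_le_ncard_of_injOn Prod.fst ?_ ?_ ((hyp_finite n).diff (t := {bw}))
      · rintro ⟨a, b⟩ ⟨ha, hb, hs⟩
        refine ⟨ha, ?_⟩
        intro hmem
        simp only [Set.mem_singleton_iff] at hmem
        exact h2bw (hmem ▸ step_two_mem hs)
      · rintro ⟨a, b⟩ ⟨ha, hb, hs⟩ ⟨a', b'⟩ ⟨ha', hb', hs'⟩ hfst
        simp only at hfst
        subst hfst
        have := hnb a ha b b' hs hs'
        rw [this]
    rw [Set.ncard_diff_singleton_of_mem hbw] at hle
    exact hle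
  unfold vFun
  omega
/-- An even nonnegative integer `n` satisfies `v(n) = 0` iff `n = 0`, or `n = 2^t − 2`
or `n = 2^t` for some positive integer `t`. -/
theorem v_eq_zero_iff (n : ℕ) (hn : Even n) :
    vFun n = 0 ↔ n = 0 ∨ ∃ t : ℕ, 0 < t ∧ (n = 2 ^ t - 2 ∨ n = 2 ^ t) := by
  constructor
  · intro h
    by_contra hcon
    push_neg at hcon
    obtain ⟨h0, hns⟩ := hcon
    have hb := rich_count n hn h0 hns
    unfold vFun at h
    omega
  · rintro (rfl | ⟨t, ht, rfl | rfl⟩)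
    · exact noBranch_count 0 noBranch_zero
    · exact noBranch_count _ (noBranch_pow_sub_two t)
    · exact noBranch_count _ (noBranch_pow t)
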